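/- arXiv:math/0307113 — 4 statements merged into one kernel-verified Lean document; each statement's English description precedes it below -/
import Mathlib

section
/- Let R be a commutative ring of characteristic 2 with a divided power ideal I such that γ_2 satisfies γ_2(ax) = a²γ_2(x) for a ∈ R, x ∈ I, and γ_2(xy) = 0 for x, y ∈ I. If m is a nilpotent ideal of R (say m^N = 0), then for every z in m·I, there exists r such that the r-fold iterate γ_2^r(z) = 0; i.e., γ_2 acts locally nilpotently on m·I. -/
/-! From `γₙ(a x) = aⁿ γₙ(x)` and the binomial formula for `γₙ(x + y)`, the divided powers map
`J · I` into `Jⁿ · I` for every ideal `J`. Iterating, `γ₂^[r]` maps `m · I` into `m ^ 2 ^ r · I`,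
which is zero as soon as `2 ^ r ≥ N`. -/

namespace DividedPowers

variable {A : Type*} [CommSemiring A] {I : Ideal A} (hI : DividedPowers I) {J : Ideal A}

theorem dpow_mem_pow_mul {n : ℕ} (hn : n ≠ 0) {z : A} (hz : z ∈ J * I) :
    hI.dpow n z ∈ J ^ n * I := by
  induction hz using Submodule.mul_induction_on' generalizing n with
  | mem_mul_mem a ha x hx =>
    rw [hI.dpow_mul hx]
    exact Ideal.mul_mem_mul (Ideal.pow_mem_pow ha n) (hI.dpow_mem hn hx)
  | add x hx y hy ihx ihy =>
    have hxI : x ∈ I := Ideal.mul_le_right hx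
    rw [hI.dpow_add' hxI (Ideal.mul_le_right hy)]
    refine Ideal.sum_mem _ fun k hk => ?_
    rcases Nat.eq_zero_or_pos k with rfl | hk0
    · simpa [hI.dpow_zero hxI] using ihy hn
    -- `J ^ 0 = ⊤` lets this cover `k = n` too, where `γ₀ y = 1` is not in `J⁰ · I`.
    have hy' : hI.dpow (n - k) y ∈ J ^ (n - k) := by
      rcases Nat.eq_zero_or_pos (n - k) with h | h
      · simp [h]
      · exact Ideal.mul_le_left (ihy h.ne')
    have hkn : k ≤ n := Nat.lt_succ_iff.mp (Finset.mem_range.mp hk)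
    have := Ideal.mul_mem_mul (ihx hk0.ne') hy'
    rwa [mul_right_comm, ← pow_add, Nat.add_sub_cancel' hkn] at this

theorem iterate_dpow_mem_pow_mul {n : ℕ} (hn : n ≠ 0) {z : A} (hz : z ∈ J * I) (r : ℕ) :
    (hI.dpow n)^[r] z ∈ J ^ (n ^ r) * I := by
  induction r with
  | zero => simpa using hz
  | succ r ih =>
    rw [Function.iterate_succ_apply', pow_succ, pow_mul]
    exact hI.dpow_mem_pow_mul hn ih

end DividedPowers

theorem stmt_4_general {R : Type*} [CommRing R] {I : Ideal R}
    (hI : DividedPowers I)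
    (m : Ideal R) (N : ℕ) (hm : m ^ N = 0) :
    ∀ z ∈ m * I, ∃ r : ℕ, (fun w => hI.dpow 2 w)^[r] z = 0 := by
  intro z hz
  refine ⟨N, ?_⟩
  have hpow : m ^ (2 ^ N) = 0 :=
    le_bot_iff.mp (hm ▸ Ideal.pow_le_pow_right N.lt_two_pow_self.le :)
  simpa [hpow] using hI.iterate_dpow_mem_pow_mul two_ne_zero hz N

/-- In a commutative ring of characteristic 2 with a divided power ideal `I`
such that the divided square kills products of elements of `I`, if `m` is a nilpotent
ideal (`m ^ N = 0`) then the divided square `γ₂` acts locally nilpotently on `m·I`: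
every `z ∈ m·I` is annihilated by some iterate of `γ₂`.
(The rules `γ₂(a·x) = a²·γ₂(x)` and additivity are part of the divided power structure.) -/
theorem stmt_4 {R : Type*} [CommRing R] [CharP R 2] {I : Ideal R}
    (hI : DividedPowers I)
    (hmul : ∀ x ∈ I, ∀ y ∈ I, hI.dpow 2 (x * y) = 0)
    (m : Ideal R) (N : ℕ) (hm : m ^ N = 0) :
    ∀ z ∈ m * I, ∃ r : ℕ, (fun w => hI.dpow 2 w)^[r] z = 0 :=
  stmt_4_general hI m N hm
end

section
/- Let R be a commutative ring of characteristic 2 with divided power operations γ_k on an ideal I satisfying γ_k(ax+by) = Σ_{r+s=k} γ_r(ax)γ_s(by), γ_k(ax) = a^k γ_k(x), and γ_2(uv) = 0 for u,v ∈ I. Then for a, b ∈ R and x, y ∈ I: γ_2^r(ax + by) ≡ a^{2^r} γ_2^r(x) + b^{2^r} γ_2^r(y) modulo the ideal generated by products of two elements of I, for all r ≥ 1. -/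
/-!
Since `γ₂(u + v) = γ₂ u + u v + γ₂ v` on `I`, the divided square is additive modulo `I·I`; as it
also kills products, it maps `I·I` into itself, so `P ≡ A + B` implies `γ₂ P ≡ γ₂ A + γ₂ B`
modulo `I·I`. Together with `γ₂(c X) = c² γ₂ X` this gives the congruence by induction on `r`,
starting from the trivial case `r = 0`.
-/

namespace DividedPowers

variable {R : Type*} [CommRing R] {I : Ideal R} (hI : DividedPowers I)
include hI

theorem dpow_two_add {u v : R} (hu : u ∈ I) (hv : v ∈ I) :
    hI.dpow 2 (u + v) = hI.dpow 2 u + u * v + hI.dpow 2 v := by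
  rw [hI.dpow_add hu hv, Finset.Nat.sum_antidiagonal_eq_sum_range_succ_mk]
  simp only [Finset.sum_range_succ, Finset.sum_range_zero, Nat.sub_self, Nat.sub_zero,
    hI.dpow_zero hu, hI.dpow_zero hv, hI.dpow_one hu, hI.dpow_one hv]
  ring

theorem iterate_dpow_two_mem {z : R} (hz : z ∈ I) (r : ℕ) :
    (fun w => hI.dpow 2 w)^[r] z ∈ I := by
  induction r with
  | zero => exact hz
  | succ n ih => rw [Function.iterate_succ_apply']; exact hI.dpow_mem two_ne_zero ih

variable (hmul : ∀ u ∈ I, ∀ v ∈ I, hI.dpow 2 (u * v) = 0)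
include hmul

theorem dpow_two_mem_mul_self {e : R} (he : e ∈ I * I) : hI.dpow 2 e ∈ I * I := by
  suffices h : e ∈ I ∧ hI.dpow 2 e ∈ I * I from h.2
  refine Submodule.mul_induction_on he (fun u hu v hv => ?_) (fun p q hp hq => ?_)
  · exact ⟨I.mul_mem_left u hv, by rw [hmul u hu v hv]; exact zero_mem _⟩
  · refine ⟨I.add_mem hp.1 hq.1, ?_⟩
    rw [hI.dpow_two_add hp.1 hq.1]
    exact add_mem (add_mem hp.2 (Ideal.mul_mem_mul hp.1 hq.1)) hq.2

theorem dpow_two_sub_add_mem_mul_self {P A B : R} (hA : A ∈ I) (hB : B ∈ I)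
    (h : P - (A + B) ∈ I * I) :
    hI.dpow 2 P - (hI.dpow 2 A + hI.dpow 2 B) ∈ I * I := by
  set e := P - (A + B)
  have heI : e ∈ I := Ideal.mul_le_right h
  have hP : P = A + (B + e) := by ring
  have hdiff : hI.dpow 2 P - (hI.dpow 2 A + hI.dpow 2 B) = A * (B + e) + B * e + hI.dpow 2 e := by
    rw [hP, hI.dpow_two_add hA (I.add_mem hB heI), hI.dpow_two_add hB heI]
    ring
  rw [hdiff]
  exact add_mem (add_mem (Ideal.mul_mem_mul hA (I.add_mem hB heI)) (Ideal.mul_mem_left _ _ h))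
    (hI.dpow_two_mem_mul_self hmul h)

theorem iterate_dpow_two_add_sub_mem_mul_self (a b : R) {x y : R} (hx : x ∈ I) (hy : y ∈ I)
    (r : ℕ) :
    (fun w => hI.dpow 2 w)^[r] (a * x + b * y)
        - (a ^ (2 ^ r) * (fun w => hI.dpow 2 w)^[r] x
            + b ^ (2 ^ r) * (fun w => hI.dpow 2 w)^[r] y) ∈ I * I := by
  induction r with
  | zero => simp
  | succ n ih =>
    have hX := hI.iterate_dpow_two_mem hx n
    have hY := hI.iterate_dpow_two_mem hy n
    simp only [Function.iterate_succ_apply']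
    rw [pow_succ, pow_mul, pow_mul, ← hI.dpow_mul hX, ← hI.dpow_mul hY]
    exact hI.dpow_two_sub_add_mem_mul_self hmul (I.mul_mem_left _ hX) (I.mul_mem_left _ hY) ih

end DividedPowers

theorem stmt_5_general {R : Type*} [CommRing R] {I : Ideal R}
    (hI : DividedPowers I)
    (hmul : ∀ u ∈ I, ∀ v ∈ I, hI.dpow 2 (u * v) = 0)
    (a b x y : R) (hx : x ∈ I) (hy : y ∈ I) :
    ∀ r : ℕ, 1 ≤ r →
      (fun w => hI.dpow 2 w)^[r] (a * x + b * y)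
        - (a ^ (2 ^ r) * (fun w => hI.dpow 2 w)^[r] x
            + b ^ (2 ^ r) * (fun w => hI.dpow 2 w)^[r] y) ∈ I * I :=
  fun r _ => hI.iterate_dpow_two_add_sub_mem_mul_self hmul a b hx hy r

/-- In a commutative ring of characteristic 2 with divided powers on an
ideal `I` whose divided square kills products of elements of `I`, for `a b : R` and
`x y ∈ I` the `r`-fold iterated divided square satisfies
`γ₂^r(ax + by) ≡ a^(2^r)·γ₂^r(x) + b^(2^r)·γ₂^r(y)` modulo the ideal `I·I`
generated by products of two elements of `I`, for all `r ≥ 1`. -/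
theorem stmt_5 {R : Type*} [CommRing R] [CharP R 2] {I : Ideal R}
    (hI : DividedPowers I)
    (hmul : ∀ u ∈ I, ∀ v ∈ I, hI.dpow 2 (u * v) = 0)
    (a b x y : R) (hx : x ∈ I) (hy : y ∈ I) :
    ∀ r : ℕ, 1 ≤ r →
      (fun w => hI.dpow 2 w)^[r] (a * x + b * y)
        - (a ^ (2 ^ r) * (fun w => hI.dpow 2 w)^[r] x
            + b ^ (2 ^ r) * (fun w => hI.dpow 2 w)^[r] y) ∈ I * I :=
  stmt_5_general hI hmul a b x y hx hy
end

section
/- The homotopy operations δ_i on the homotopy of simplicial commutative F_2-algebras satisfy δ_{2^{t+1}} ∘ δ_{2^t + 1} = 0 and δ_{2^{t+1}} ∘ δ_{2^t + 2} = 0 for all t ≥ 1, as a consequence of the Adem-type relation δ_i δ_j = Σ_{(i+1)/2 ≤ k ≤ (i+j)/3} C(j-i+k-1, j-k) δ_{i+j-k} δ_k mod 2 (valid for i < 2j). -/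
/-! The algebra of mod-2 homotopy operations: the free `𝔽₂`-algebra on generators
`δ_i` (meaningful for `i ≥ 2`) modulo the Adem-type relations
`δ_i δ_j = Σ_{⌈(i+1)/2⌉ ≤ k ≤ ⌊(i+j)/3⌋} C(j-i+k-1, j-k) δ_{i+j-k} δ_k` for `i < 2j`. -/

/-- Generator `δ_i` in the free algebra. -/
noncomputable def deltaF (i : ℕ) : FreeAlgebra (ZMod 2) ℕ := FreeAlgebra.ι (ZMod 2) i

/-- The Adem-type relations among the `δ_i` (for `2 ≤ i`, `2 ≤ j`, `i < 2j`). -/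
inductive AdemRel : FreeAlgebra (ZMod 2) ℕ → FreeAlgebra (ZMod 2) ℕ → Prop
  | rel (i j : ℕ) (h2i : 2 ≤ i) (h2j : 2 ≤ j) (hij : i < 2 * j) :
      AdemRel (deltaF i * deltaF j)
        (∑ k ∈ Finset.Icc ((i + 2) / 2) ((i + j) / 3),
          ((Nat.choose (j - i + k - 1) (j - k) : ZMod 2)) • (deltaF (i + j - k) * deltaF k))

/-- The algebra of mod-2 homotopy operations. -/
abbrev OpAlg : Type := RingQuot AdemRel

/-- The operation `δ_i` in the algebra of operations. -/
noncomputable def δ (i : ℕ) : OpAlg := RingQuot.mkRingHom AdemRel (deltaF i)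

lemma delta_mul_eq_zero (i j : ℕ) (h2i : 2 ≤ i) (h2j : 2 ≤ j) (hij : i < 2 * j)
    (hempty : (i + j) / 3 < (i + 2) / 2) : δ i * δ j = 0 := by
  have hrel := AdemRel.rel i j h2i h2j hij
  have h := RingQuot.mkRingHom_rel hrel
  have hzero : (∑ k ∈ Finset.Icc ((i + 2) / 2) ((i + j) / 3),
      ((Nat.choose (j - i + k - 1) (j - k) : ZMod 2)) • (deltaF (i + j - k) * deltaF k)) = 0 := by
    rw [Finset.Icc_eq_empty (by omega), Finset.sum_empty]
  rw [hzero] at h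
  show RingQuot.mkRingHom AdemRel (deltaF i) * RingQuot.mkRingHom AdemRel (deltaF j) = 0
  rw [← map_mul, h, map_zero]

/-- `δ_{2^{t+1}} ∘ δ_{2^t + 1} = 0` and `δ_{2^{t+1}} ∘ δ_{2^t + 2} = 0`
for all `t ≥ 1`, in the algebra of mod-2 homotopy operations. -/
theorem stmt_10 (t : ℕ) (ht : 1 ≤ t) :
    δ (2 ^ (t + 1)) * δ (2 ^ t + 1) = 0 ∧ δ (2 ^ (t + 1)) * δ (2 ^ t + 2) = 0 := by
  have hn : 2 ≤ 2 ^ t := Nat.one_lt_two_pow (by omega)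
  have h2 : 2 ^ (t + 1) = 2 * 2 ^ t := by ring
  constructor
  · exact delta_mul_eq_zero _ _ (by omega) (by omega) (by omega) (by omega)
  · exact delta_mul_eq_zero _ _ (by omega) (by omega) (by omega) (by omega)
end

section
/- In the algebra of mod-2 homotopy operations generated by δ_i (i ≥ 2) subject to the Adem relations, define θ(s,t) = δ_{2^s} δ_{2^{s-1}} ⋯ δ_{2^{t+1}} for integers s > t ≥ 0. Then for any i ≥ 2 and t ≥ 1 with 2^t < i, there exists s > t such that θ(s,t) ∘ δ_i = 0. -/
/-- `θ(s,t) = δ_{2^s} δ_{2^{s-1}} ⋯ δ_{2^{t+1}}` for `s > t`. -/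
noncomputable def θ (s t : ℕ) : OpAlg :=
  (((List.range (s - t)).map fun a => δ (2 ^ (s - a))).prod)


lemma adem_op (i j : ℕ) (h2i : 2 ≤ i) (h2j : 2 ≤ j) (hij : i < 2*j) :
    δ i * δ j = ∑ k ∈ Finset.Icc ((i+2)/2) ((i+j)/3),
      ((Nat.choose (j-i+k-1) (j-k) : ZMod 2)) • (δ (i+j-k) * δ k) := by
  have hδ : ∀ n, δ n = RingQuot.mkAlgHom (ZMod 2) AdemRel (deltaF n) := by
    intro n
    rw [δ, ← RingQuot.mkAlgHom_coe (ZMod 2) AdemRel]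
    rfl
  have h := RingQuot.mkAlgHom_rel (ZMod 2) (AdemRel.rel i j h2i h2j hij)
  simp only [map_mul, map_sum, map_smul] at h
  simp only [hδ]
  exact h

lemma theta_succ (s t : ℕ) (h : t + 1 ≤ s) : θ s t = θ s (t+1) * δ (2^(t+1)) := by
  have h1 : s - t = (s - (t+1)) + 1 := by omega
  have h2 : s - (s - (t+1)) = t + 1 := by omega
  rw [θ, θ, h1, List.range_succ, List.map_append, List.prod_append]
  simp only [List.map_cons, List.map_nil, List.prod_cons, List.prod_nil, mul_one, h2]

lemma key : ∀ n t i : ℕ, 2 ^ t < i → i - 2 ^ t = n → ∃ s₀ > t, ∀ s ≥ s₀, θ s t * δ i = 0 := by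
  intro n
  induction n using Nat.strong_induction_on with
  | _ n IH =>
    intro t i hti hn
    have hp : (2:ℕ)^(t+1) = 2 * 2^t := by rw [pow_succ]; ring
    have h1 : (1:ℕ) ≤ 2^t := Nat.one_le_two_pow
    have hadem := adem_op (2^(t+1)) i (by omega) (by omega) (by omega)
    set S := Finset.Icc ((2^(t+1)+2)/2) ((2^(t+1)+i)/3) with hS
    have hkfacts : ∀ k ∈ S, 2^t + 1 ≤ k ∧ k < i := by
      intro k hk
      rw [hS, Finset.mem_Icc] at hk
      have hhi : 3 * k ≤ 2^(t+1) + i := by have := hk.2; omega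
      omega
    have hex : ∀ k ∈ S, ∃ s₀ > t + 1, ∀ s ≥ s₀, θ s (t+1) * δ (2^(t+1)+i-k) = 0 := by
      intro k hk
      obtain ⟨hk1, hk2⟩ := hkfacts k hk
      exact IH (2^(t+1)+i-k - 2^(t+1)) (by omega) (t+1) (2^(t+1)+i-k) (by omega) rfl
    choose! f hf1 hf2 using hex
    refine ⟨max (t+2) (S.sup f), lt_of_lt_of_le (by omega) (le_max_left _ _), ?_⟩
    intro s hs
    have hst : t + 1 ≤ s := le_trans (le_trans (by omega) (le_max_left (t+2) (S.sup f))) hs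
    rw [theta_succ s t hst, mul_assoc, hadem, Finset.mul_sum]
    apply Finset.sum_eq_zero
    intro k hk
    have hsk : s ≥ f k := le_trans (le_trans (Finset.le_sup hk) (le_max_right (t+2) _)) hs
    rw [mul_smul_comm, ← mul_assoc, hf2 k hk s hsk, zero_mul, smul_zero]

/-- for any `i ≥ 2` and `t ≥ 1` with `2^t < i`, we have
`θ(s,t) ∘ δ_i = 0` for all sufficiently large `s > t`. -/
theorem stmt_11 (i t : ℕ) (h2 : 2 ≤ i) (ht : 1 ≤ t) (hti : 2 ^ t < i) :
    ∃ s₀ > t, ∀ s ≥ s₀, θ s t * δ i = 0 :=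
  key (i - 2^t) t i hti rfl
end
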